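/- arXiv:2408.10968 — 3 statements merged into one kernel-verified Lean document; each statement's English description precedes it below -/
import Mathlib

section
/- Let H₊ and H₋ be complex Hilbert spaces and H = H₊ × H₋ with its standard form ω. (1) For any two maximal completely positive-definite closed subspaces M and N of H there exists a continuous linear bijection Φ : H → H with ω(Φx, Φy) = ω(x,y) for all x, y ∈ H and Φ(M) = N. (2) If Φ : H → H is a continuous linear bijection with ω(Φx, Φy) = ω(x,y) for all x, y and Φ(H₊ × {0}) = H₊ × {0}, then there exist unitary operators g₁₁ on H₊ and g₂₂ on H₋ such that Φ(x₁, x₂) = (g₁₁ x₁, g₂₂ x₂) for all (x₁, x₂) ∈ H. -/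
noncomputable section

open Complex

variable {Hp Hm : Type*}
  [NormedAddCommGroup Hp] [InnerProductSpace ℂ Hp] [CompleteSpace Hp]
  [NormedAddCommGroup Hm] [InnerProductSpace ℂ Hm] [CompleteSpace Hm]

/-- The standard strong symplectic form `ω((x₁,x₂),(y₁,y₂)) = i⟨x₁,y₁⟩ − i⟨x₂,y₂⟩` on
`H₊ × H₋`, linear in the first argument and conjugate-linear in the second.
(Since Mathlib's `inner` is conjugate-linear in its *first* argument, the paper's
`⟨a,b⟩` is `inner b a`.) -/
def stdForm (x y : Hp × Hm) : ℂ :=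
  Complex.I * (inner ℂ y.1 x.1 : ℂ) - Complex.I * (inner ℂ y.2 x.2 : ℂ)

/-- `M` is a completely positive-definite closed subspace. -/
def IsCPD (M : Submodule ℂ (Hp × Hm)) : Prop :=
  IsClosed (M : Set (Hp × Hm)) ∧
    ∃ c : ℝ, 0 < c ∧ ∀ x ∈ M, c * ‖x‖ ^ 2 ≤ (-Complex.I * stdForm x x).re

/-- `M` is a maximal completely positive-definite subspace. -/
def IsMaxCPD (M : Submodule ℂ (Hp × Hm)) : Prop :=
  IsCPD M ∧ ∀ N : Submodule ℂ (Hp × Hm), IsCPD N → M ≤ N → N = M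

/-!
A maximal completely positive-definite subspace is the graph `{(u, K u)}` of a strict
contraction `K : H₊ → H₋`: positivity puts it inside such a graph, maximality makes it equal.
With `S = (1 - K†K)^(-1/2)` and `S' = (1 - KK†)^(-1/2)`, the boost
`(x₁, x₂) ↦ (S x₁ + K† S' x₂, K S x₁ + S' x₂)` preserves `ω` and carries `H₊ × {0}` onto that
graph; a boost composed with the inverse of another proves (1).
For (2), `ω`-orthogonality to `H₊ × {0}` forces `Φ ({0} × H₋) ⊆ {0} × H₋`, and `ω` restricts to
`±i⟨·,·⟩` on the two axes, so the diagonal blocks of `Φ` preserve inner products; they are onto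
because `Φ` is.
-/

open ContinuousLinearMap
open scoped InnerProductSpace

theorem norm_snd_le_of_mul_norm_sq_le {E F : Type*} [SeminormedAddCommGroup E]
    [SeminormedAddCommGroup F] {c : ℝ} (hc : 0 ≤ c) {x : E × F}
    (hx : c * ‖x‖ ^ 2 ≤ ‖x.1‖ ^ 2 - ‖x.2‖ ^ 2) : ‖x.2‖ ≤ (√(1 + c))⁻¹ * ‖x.1‖ := by
  have h₂ : c * ‖x.2‖ ^ 2 ≤ c * ‖x‖ ^ 2 := by gcongr; exact norm_snd_le x
  have h : √(1 + c) * ‖x.2‖ ≤ ‖x.1‖ := by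
    rw [← Real.sqrt_sq (norm_nonneg x.1), ← Real.sqrt_sq (norm_nonneg x.2),
      ← Real.sqrt_mul (by linarith)]
    exact Real.sqrt_le_sqrt (by linarith)
  rwa [inv_mul_eq_div, le_div_iff₀' (by positivity)]

section StdForm

variable {E F : Type*} [NormedAddCommGroup E] [InnerProductSpace ℂ E]
  [NormedAddCommGroup F] [InnerProductSpace ℂ F]

theorem re_neg_I_mul_stdForm_self (x : E × F) :
    (-I * stdForm x x).re = ‖x.1‖ ^ 2 - ‖x.2‖ ^ 2 := by
  have h : -I * stdForm x x = ⟪x.1, x.1⟫_ℂ - ⟪x.2, x.2⟫_ℂ := by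
    simp only [stdForm]
    linear_combination (⟪x.2, x.2⟫_ℂ - ⟪x.1, x.1⟫_ℂ) * I_mul_I
  rw [h, sub_re, inner_self_eq_norm_sq_to_K, inner_self_eq_norm_sq_to_K]
  norm_cast

theorem stdForm_symm_apply {e : (E × F) ≃L[ℂ] (E × F)}
    (he : ∀ x y, stdForm (e x) (e y) = stdForm x y) (x y : E × F) :
    stdForm (e.symm x) (e.symm y) = stdForm x y := by
  simpa using (he (e.symm x) (e.symm y)).symm

theorem isCPD_graph {K : E →L[ℂ] F} (hK : ‖K‖ < 1) : IsCPD (K : E →ₗ[ℂ] F).graph := by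
  refine ⟨isClosed_eq continuous_snd (K.continuous.comp continuous_fst), 1 - ‖K‖ ^ 2,
    by nlinarith [norm_nonneg K], fun x hx ↦ ?_⟩
  rw [LinearMap.mem_graph_iff] at hx
  have hKx : ‖x.2‖ ≤ ‖K‖ * ‖x.1‖ := hx ▸ K.le_opNorm x.1
  have hx₂ : ‖x.2‖ ≤ ‖x.1‖ := hKx.trans (mul_le_of_le_one_left (norm_nonneg _) hK.le)
  rw [re_neg_I_mul_stdForm_self, Prod.norm_def, max_eq_left hx₂]
  nlinarith [norm_nonneg x.2]

end StdForm

section Maximal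

variable {E F : Type*} [NormedAddCommGroup E] [InnerProductSpace ℂ E] [CompleteSpace E]
  [NormedAddCommGroup F] [InnerProductSpace ℂ F] [CompleteSpace F]

theorem exists_le_graph_of_norm_snd_le {M : Submodule ℂ (E × F)}
    (hM : IsClosed (M : Set (E × F))) {r : ℝ} (hr₀ : 0 ≤ r) (hr₁ : r ≤ 1)
    (hMr : ∀ x ∈ M, ‖x.2‖ ≤ r * ‖x.1‖) :
    ∃ K : E →L[ℂ] F, ‖K‖ ≤ r ∧ M ≤ (K : E →ₗ[ℂ] F).graph := by
  let π : M →ₗᵢ[ℂ] E :=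
    { toLinearMap := LinearMap.fst ℂ E F ∘ₗ M.subtype
      norm_map' := fun x ↦ by
        have := hMr x x.2
        simp only [LinearMap.coe_comp, Function.comp_apply, Submodule.coe_subtype,
          LinearMap.fst_apply, Submodule.coe_norm, Prod.norm_def]
        rw [max_eq_left (this.trans (mul_le_of_le_one_left (norm_nonneg _) hr₁))] }
  let e := π.equivRange
  have : CompleteSpace M := hM.completeSpace_coe
  have : CompleteSpace π.range :=
    (completeSpace_congr (e := e.toLinearEquiv.toEquiv) e.isometry.isUniformEmbedding).1 ‹_›
  -- `K u` is the second coordinate of the point of `M` over the projection of `u` onto `π.range`.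
  let K : E →L[ℂ] F := snd ℂ E F ∘L M.subtypeL ∘L
    (e.symm.toContinuousLinearEquiv : π.range →L[ℂ] M) ∘L π.range.orthogonalProjectionOnto
  refine ⟨K, K.opNorm_le_bound hr₀ fun u ↦ ?_, fun x hx ↦ ?_⟩
  · set m := e.symm (π.range.orthogonalProjectionOnto u)
    calc ‖K u‖ = ‖(m : E × F).2‖ := rfl
      _ ≤ r * ‖(m : E × F).1‖ := hMr m m.2
      _ = r * ‖e m‖ := rfl
      _ ≤ r * ‖u‖ := by
        rw [e.apply_symm_apply]
        exact mul_le_mul_of_nonneg_left (Submodule.norm_orthogonalProjectionOnto_apply_le ..) hr₀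
  · have h : π.range.orthogonalProjectionOnto x.1 = e ⟨x, hx⟩ :=
      Submodule.orthogonalProjectionOnto_mem_subspace_eq_self (e ⟨x, hx⟩)
    change x.2 = (e.symm (π.range.orthogonalProjectionOnto x.1) : E × F).2
    rw [h, e.symm_apply_apply]

theorem IsCPD.exists_le_graph {M : Submodule ℂ (E × F)} (hM : IsCPD M) :
    ∃ K : E →L[ℂ] F, ‖K‖ < 1 ∧ M ≤ (K : E →ₗ[ℂ] F).graph := by
  obtain ⟨hMc, c, hc, hcM⟩ := hM
  have hr : (√(1 + c))⁻¹ < 1 :=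
    inv_lt_one_of_one_lt₀ (Real.lt_sqrt zero_le_one |>.2 (by linarith))
  obtain ⟨K, hKr, hMK⟩ := exists_le_graph_of_norm_snd_le hMc (by positivity) hr.le fun x hx ↦
    norm_snd_le_of_mul_norm_sq_le hc.le (re_neg_I_mul_stdForm_self x ▸ hcM x hx)
  exact ⟨K, hKr.trans_lt hr, hMK⟩

theorem IsMaxCPD.exists_eq_graph {M : Submodule ℂ (E × F)} (hM : IsMaxCPD M) :
    ∃ K : E →L[ℂ] F, ‖K‖ < 1 ∧ (M : Set (E × F)) = {p | p.2 = K p.1} := by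
  obtain ⟨K, hK, hMK⟩ := hM.1.exists_le_graph
  exact ⟨K, hK, congrArg SetLike.coe (hM.2 _ (isCPD_graph hK) hMK).symm⟩

end Maximal

theorem IsStrictlyPositive.exists_isSelfAdjoint_mul_mul_eq_one {A : Type*} [CStarAlgebra A]
    [PartialOrder A] [StarOrderedRing A] {a : A} (ha : IsStrictlyPositive a) :
    ∃ s : A, IsSelfAdjoint s ∧ IsUnit s ∧ s * a * s = 1 := by
  refine ⟨a ^ (-(1 / 2) : ℝ), CFC.rpow_nonneg.isSelfAdjoint, ha.isUnit.cfcRpow _ ha.nonneg, ?_⟩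
  calc a ^ (-(1 / 2) : ℝ) * a * a ^ (-(1 / 2) : ℝ)
      = a ^ (-(1 / 2) + 1 + -(1 / 2) : ℝ) := by
        rw [CFC.rpow_add ha.isUnit, CFC.rpow_add ha.isUnit, CFC.rpow_one a ha.nonneg]
    _ = 1 := by norm_num [CFC.rpow_zero a ha.nonneg]

section Boost

variable {E F : Type*} [NormedAddCommGroup E] [InnerProductSpace ℂ E] [CompleteSpace E]
  [NormedAddCommGroup F] [InnerProductSpace ℂ F] [CompleteSpace F]

theorem isStrictlyPositive_one_sub_adjoint_comp_self {K : E →L[ℂ] F} (hK : ‖K‖ < 1) :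
    IsStrictlyPositive (1 - adjoint K ∘L K) := by
  have hKK : ‖adjoint K ∘L K‖ < 1 := by
    rw [norm_adjoint_comp_self]; nlinarith [norm_nonneg K]
  refine ⟨?_, (Units.oneSub _ hKK).isUnit⟩
  rw [sub_nonneg, ← CStarAlgebra.norm_le_one_iff_of_nonneg _
    ((nonneg_iff_isPositive _).2 (isPositive_adjoint_comp_self K))]
  exact hKK.le

def coupling (K : E →L[ℂ] F) : (E × F) →L[ℂ] (E × F) :=
  (fst ℂ E F + adjoint K ∘L snd ℂ E F).prod (K ∘L fst ℂ E F + snd ℂ E F)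

@[simp]
theorem coupling_apply (K : E →L[ℂ] F) (x : E × F) :
    coupling K x = (x.1 + adjoint K x.2, K x.1 + x.2) := rfl

theorem coupling_neg_comp_coupling (K : E →L[ℂ] F) :
    coupling (-K) ∘L coupling K = (1 - adjoint K ∘L K).prodMap (1 - K ∘L adjoint K) := by
  ext x <;> simp <;> abel

theorem coupling_comp_coupling_neg (K : E →L[ℂ] F) :
    coupling K ∘L coupling (-K) = (1 - adjoint K ∘L K).prodMap (1 - K ∘L adjoint K) := by
  ext x <;> simp <;> abel

theorem stdForm_coupling (K : E →L[ℂ] F) (x y : E × F) :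
    stdForm (coupling K x) (coupling K y) =
      I * ⟪y.1, (1 - adjoint K ∘L K) x.1⟫_ℂ - I * ⟪y.2, (1 - K ∘L adjoint K) x.2⟫_ℂ := by
  simp only [stdForm, coupling_apply, map_add, inner_add_left, inner_add_right, sub_apply,
    one_apply_eq_self, comp_apply, inner_sub_right, adjoint_inner_left, adjoint_inner_right]
  have h : ⟪K (adjoint K y.2), x.2⟫_ℂ = ⟪y.2, K (adjoint K x.2)⟫_ℂ := by
    rw [← adjoint_inner_right, adjoint_inner_left]
  linear_combination I * h

theorem bijective_coupling {K : E →L[ℂ] F} (hK : ‖K‖ < 1) : Function.Bijective (coupling K) := by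
  have hA := (isStrictlyPositive_one_sub_adjoint_comp_self hK).isUnit
  have hB := (isStrictlyPositive_one_sub_adjoint_comp_self (K := adjoint K)
    (by rwa [LinearIsometryEquiv.norm_map])).isUnit
  rw [adjoint_adjoint] at hB
  have hAB : Function.Bijective ((1 - adjoint K ∘L K).prodMap (1 - K ∘L adjoint K)) := by
    rw [coe_prodMap']
    exact (isUnit_iff_bijective.mp hA).prodMap (isUnit_iff_bijective.mp hB)
  refine ⟨?_, ?_⟩
  · rw [← coupling_neg_comp_coupling, coe_comp] at hAB
    exact hAB.injective.of_comp
  · rw [← coupling_comp_coupling_neg, coe_comp] at hAB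
    exact hAB.surjective.of_comp

theorem exists_stdForm_equiv_image_eq_graph {K : E →L[ℂ] F} (hK : ‖K‖ < 1) :
    ∃ e : (E × F) ≃L[ℂ] (E × F), (∀ x y, stdForm (e x) (e y) = stdForm x y) ∧
      e '' {p | p.2 = 0} = {p | p.2 = K p.1} := by
  have hK' : ‖adjoint K‖ < 1 := by rwa [LinearIsometryEquiv.norm_map]
  obtain ⟨S, hS, hSu, hSAS⟩ :=
    (isStrictlyPositive_one_sub_adjoint_comp_self hK).exists_isSelfAdjoint_mul_mul_eq_one
  obtain ⟨S', hS', hS'u, hS'BS'⟩ :=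
    (isStrictlyPositive_one_sub_adjoint_comp_self hK').exists_isSelfAdjoint_mul_mul_eq_one
  rw [adjoint_adjoint] at hS'BS'
  have hSbij := isUnit_iff_bijective.mp hSu
  have hΦ : IsUnit (coupling K ∘L S.prodMap S') := by
    rw [isUnit_iff_bijective, coe_comp, coe_prodMap']
    exact (bijective_coupling hK).comp (hSbij.prodMap (isUnit_iff_bijective.mp hS'u))
  refine ⟨.ofUnit hΦ.unit, fun x y ↦ ?_, ?_⟩
  · have hS₁ (u : E) : S ((1 - adjoint K ∘L K) (S u)) = u := congr($hSAS u)
    have hS'₁ (w : F) : S' ((1 - K ∘L adjoint K) (S' w)) = w := congr($hS'BS' w)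
    change stdForm (coupling K (S x.1, S' x.2)) (coupling K (S y.1, S' y.2)) = _
    rw [stdForm_coupling, ← adjoint_inner_right S, ← adjoint_inner_right S', hS.adjoint_eq,
      hS'.adjoint_eq, hS₁, hS'₁]
    rfl
  · ext p
    constructor
    · rintro ⟨x, hx, rfl⟩
      change (coupling K (S x.1, S' x.2)).2 = K (coupling K (S x.1, S' x.2)).1
      simp [show x.2 = 0 from hx]
    · intro hp
      obtain ⟨u, hu⟩ := hSbij.surjective p.1
      refine ⟨(u, 0), rfl, ?_⟩
      change coupling K (S u, S' 0) = p
      ext <;> simp [hu, show p.2 = K p.1 from hp]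

end Boost

theorem exists_linearIsometryEquiv_of_inner_map_map {𝕜 E F : Type*} [RCLike 𝕜]
    [NormedAddCommGroup E] [InnerProductSpace 𝕜 E]
    [NormedAddCommGroup F] [InnerProductSpace 𝕜 F]
    (f : E →ₗ[𝕜] F) (hf : ∀ x y, ⟪f x, f y⟫_𝕜 = ⟪x, y⟫_𝕜) (hs : Function.Surjective f) :
    ∃ g : E ≃ₗᵢ[𝕜] F, ∀ x, g x = f x :=
  ⟨.ofSurjective (f.isometryOfInner hf) hs, fun _ ↦ rfl⟩

section Stabilizer

variable {E F : Type*} [NormedAddCommGroup E] [InnerProductSpace ℂ E]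
  [NormedAddCommGroup F] [InnerProductSpace ℂ F] {Φ : (E × F) →L[ℂ] (E × F)}
  (hform : ∀ x y, stdForm (Φ x) (Φ y) = stdForm x y)
  (himg : Φ '' {p | p.2 = 0} = {p | p.2 = 0})
include himg

theorem snd_apply_inl_eq_zero (u : E) : (Φ (u, 0)).2 = 0 := by
  have h : Φ (u, 0) ∈ Φ '' {p | p.2 = 0} := ⟨(u, 0), rfl, rfl⟩
  rwa [himg] at h

theorem exists_apply_inl_eq (z : E) : ∃ u, Φ (u, 0) = (z, 0) := by
  have h : (z, (0 : F)) ∈ Φ '' {p | p.2 = 0} := by rw [himg]; rfl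
  obtain ⟨q, hq, hΦq⟩ := h
  exact ⟨q.1, by rwa [show (q.1, (0 : F)) = q from Prod.ext rfl hq.symm]⟩

include hform

theorem inner_fst_apply_inl (u v : E) : ⟪(Φ (u, 0)).1, (Φ (v, 0)).1⟫_ℂ = ⟪u, v⟫_ℂ := by
  have h := hform (v, 0) (u, 0)
  simp only [stdForm, snd_apply_inl_eq_zero himg, inner_zero_left, mul_zero, sub_zero] at h
  exact mul_left_cancel₀ I_ne_zero h

theorem fst_apply_inr_eq_zero (w : F) : (Φ (0, w)).1 = 0 := by
  obtain ⟨u, hu⟩ := exists_apply_inl_eq himg (Φ (0, w)).1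
  have h := hform (0, w) (u, 0)
  simpa [stdForm, hu] using h

theorem inner_snd_apply_inr (w w' : F) : ⟪(Φ (0, w)).2, (Φ (0, w')).2⟫_ℂ = ⟪w, w'⟫_ℂ := by
  have h := hform (0, w') (0, w)
  simp only [stdForm, fst_apply_inr_eq_zero hform himg, inner_zero_left, mul_zero, zero_sub,
    neg_inj] at h
  exact mul_left_cancel₀ I_ne_zero h

theorem apply_eq_fst_apply_inl_snd_apply_inr (x : E × F) :
    Φ x = ((Φ (x.1, 0)).1, (Φ (0, x.2)).2) := by
  have h : Φ x = Φ (x.1, 0) + Φ (0, x.2) := by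
    rw [← map_add, Prod.mk_add_mk, add_zero, zero_add]
  rw [h]
  ext
  · simp [fst_apply_inr_eq_zero hform himg]
  · simp [snd_apply_inl_eq_zero himg]

theorem exists_snd_apply_inr_eq (hΦ : Function.Surjective Φ) (z : F) :
    ∃ w, (Φ (0, w)).2 = z := by
  obtain ⟨q, hq⟩ := hΦ (0, z)
  rw [apply_eq_fst_apply_inl_snd_apply_inr hform himg] at hq
  exact ⟨q.2, congrArg Prod.snd hq⟩

theorem exists_linearIsometryEquiv_of_stdForm_image (hΦ : Function.Surjective Φ) :
    ∃ (g₁ : E ≃ₗᵢ[ℂ] E) (g₂ : F ≃ₗᵢ[ℂ] F), ∀ x : E × F, Φ x = (g₁ x.1, g₂ x.2) := by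
  obtain ⟨g₁, hg₁⟩ := exists_linearIsometryEquiv_of_inner_map_map
    (fst ℂ E F ∘L Φ ∘L inl ℂ E F : E →ₗ[ℂ] E) (inner_fst_apply_inl hform himg)
    fun z ↦ (exists_apply_inl_eq himg z).imp fun _ h ↦ congrArg Prod.fst h
  obtain ⟨g₂, hg₂⟩ := exists_linearIsometryEquiv_of_inner_map_map
    (snd ℂ E F ∘L Φ ∘L inr ℂ E F : F →ₗ[ℂ] F) (inner_snd_apply_inr hform himg)
    (exists_snd_apply_inr_eq hform himg hΦ)
  exact ⟨g₁, g₂, fun x ↦ by rw [hg₁, hg₂, apply_eq_fst_apply_inl_snd_apply_inr hform himg x]; rfl⟩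

end Stabilizer

/-- (1) The group of continuous linear automorphisms of `H₊ × H₋` preserving the standard
form acts transitively on maximal completely positive-definite subspaces.
(2) Any form-preserving continuous linear automorphism fixing `H₊ × {0}` is block-diagonal
with unitary blocks. -/
theorem statement3 :
    (∀ M N : Submodule ℂ (Hp × Hm), IsMaxCPD M → IsMaxCPD N →
      ∃ Φ : (Hp × Hm) →L[ℂ] (Hp × Hm), Function.Bijective Φ ∧
        (∀ x y : Hp × Hm, stdForm (Φ x) (Φ y) = stdForm x y) ∧
        Φ '' (M : Set (Hp × Hm)) = (N : Set (Hp × Hm))) ∧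
    (∀ Φ : (Hp × Hm) →L[ℂ] (Hp × Hm), Function.Bijective Φ →
      (∀ x y : Hp × Hm, stdForm (Φ x) (Φ y) = stdForm x y) →
      Φ '' {p : Hp × Hm | p.2 = 0} = {p : Hp × Hm | p.2 = 0} →
      ∃ (g₁ : Hp ≃ₗᵢ[ℂ] Hp) (g₂ : Hm ≃ₗᵢ[ℂ] Hm),
        ∀ x : Hp × Hm, Φ x = (g₁ x.1, g₂ x.2)) := by
  refine ⟨fun M N hM hN ↦ ?_, fun Φ hΦ hform himg ↦
    exists_linearIsometryEquiv_of_stdForm_image hform himg hΦ.2⟩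
  obtain ⟨K, hK, hMK⟩ := hM.exists_eq_graph
  obtain ⟨L, hL, hNL⟩ := hN.exists_eq_graph
  obtain ⟨eK, hformK, himK⟩ := exists_stdForm_equiv_image_eq_graph hK
  obtain ⟨eL, hformL, himL⟩ := exists_stdForm_equiv_image_eq_graph hL
  refine ⟨eK.symm.trans eL, (eK.symm.trans eL).bijective,
    fun x y ↦ (hformL _ _).trans (stdForm_symm_apply hformK x y), ?_⟩
  rw [hMK, hNL, ← himK, ← himL]
  change (eL ∘ eK.symm) '' _ = _
  rw [Set.image_comp, eK.symm_image_image]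

end
end

section
/- Under the boundary triplet setup, for every φ ∈ H₊ and every λ ∈ ℂ with Im λ > 0, the abstract boundary value problem T*x = λx, Γ₊x = φ has exactly one solution x ∈ D(T*). -/
/-!
On `ker Γ₊` Green's formula gives `2 Im ⟪x, T* x⟫ = -‖Γ₋ x‖² ≤ 0`, hence
`Im λ ‖x‖ ≤ ‖(T* - λ) x‖` there. This gives uniqueness, and, since `T*` is closed and `Γ₊` is
bounded in the graph norm, it makes `R = (T* - λ)(ker Γ₊)` closed. A vector `v ⊥ R` is orthogonal
to `(T - λ) D(T)` because `D(T) ⊆ ker Γ₊`, so `T* v = conj λ • v`; surjectivity of `(Γ₊, Γ₋)` and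
Green's formula give `Γ₋ v = 0`, so `Im ⟪v, T* v⟫ ≥ 0`, which forces `v = 0`. Thus `R = H`, and a
solution is `u - w` for any `u` with `Γ₊ u = φ` and `w ∈ ker Γ₊` with `(T* - λ) w = (T* - λ) u`.
-/

noncomputable section

open Complex

variable {H Hp Hm : Type*}
  [NormedAddCommGroup H] [InnerProductSpace ℂ H] [CompleteSpace H]
  [NormedAddCommGroup Hp] [InnerProductSpace ℂ Hp] [CompleteSpace Hp]
  [NormedAddCommGroup Hm] [InnerProductSpace ℂ Hm] [CompleteSpace Hm]

open Filter Topology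
open scoped NNReal

section Normed

variable {𝕜 E F G : Type*} [NontriviallyNormedField 𝕜]
  [NormedAddCommGroup E] [NormedSpace 𝕜 E] [NormedAddCommGroup F] [NormedSpace 𝕜 F]
  [NormedAddCommGroup G] [NormedSpace 𝕜 G]

theorem Submodule.isClosed_map_of_norm_le [CompleteSpace E] {S : Submodule 𝕜 E}
    (hS : IsClosed (S : Set E)) (f : E →L[𝕜] F) {K : ℝ≥0} (hK : ∀ p ∈ S, ‖p‖ ≤ K * ‖f p‖) :
    IsClosed (S.map (f : E →ₗ[𝕜] F) : Set F) := by
  have : CompleteSpace S := hS.completeSpace_coe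
  have hanti : AntilipschitzWith K (f.comp S.subtypeL) :=
    ContinuousLinearMap.antilipschitz_of_bound _ fun p => hK p p.2
  convert hanti.isClosed_range (f.comp S.subtypeL).uniformContinuous using 1
  ext
  simp

theorem norm_prod_le_of_mul_norm_le_norm_sub_smul {c : ℝ} (hc : 0 < c) {x y : E} {μ : 𝕜}
    (h : c * ‖x‖ ≤ ‖y - μ • x‖) : ‖(x, y)‖ ≤ ((1 + ‖μ‖) / c + 1) * ‖y - μ • x‖ := by
  have hx : ‖x‖ ≤ ‖y - μ • x‖ / c := by rw [le_div_iff₀ hc]; linarith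
  have hy : ‖y‖ ≤ ‖y - μ • x‖ + ‖μ‖ * ‖x‖ := by
    calc ‖y‖ = ‖(y - μ • x) + μ • x‖ := by rw [sub_add_cancel]
      _ ≤ _ := (norm_add_le _ _).trans_eq (by rw [norm_smul])
  have hr : 0 ≤ ‖y - μ • x‖ / c := by positivity
  have hK : ((1 + ‖μ‖) / c + 1) * ‖y - μ • x‖ = (1 + ‖μ‖) * (‖y - μ • x‖ / c) + ‖y - μ • x‖ := by
    field_simp
  rw [Prod.norm_mk, max_le_iff, hK]
  have hμx := mul_le_mul_of_nonneg_left hx (norm_nonneg μ)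
  constructor <;> nlinarith [norm_nonneg μ, norm_nonneg (y - μ • x)]

theorem LinearPMap.IsClosed.isClosed_map_ker {f : E →ₗ.[𝕜] F} (hf : f.IsClosed)
    (Γ : f.domain →ₗ[𝕜] G) {C : ℝ} (hΓ : ∀ x, ‖Γ x‖ ^ 2 ≤ C * (‖(x : E)‖ ^ 2 + ‖f x‖ ^ 2)) :
    _root_.IsClosed ((LinearMap.ker Γ).map (f.domain.subtype.prod f.toFun) : Set (E × F)) := by
  set j := f.domain.subtype.prod f.toFun
  refine IsSeqClosed.isClosed fun {u p} hu hup => ?_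
  choose x hx_ker hx_eq using fun n => Submodule.mem_map.mp (hu n)
  obtain rfl : u = fun n => j (x n) := funext fun n => (hx_eq n).symm
  have hp : p ∈ f.graph := hf.mem_of_tendsto hup (Eventually.of_forall fun n => f.mem_graph (x n))
  obtain ⟨z, rfl⟩ := (f.mem_graph_iff' (x := p)).mp hp
  have hlim : Tendsto (fun n => j (z - x n)) atTop (𝓝 0) := by
    simpa [j, LinearPMap.map_sub] using (tendsto_const_nhds (x := j z)).sub hup
  have hbound : Tendsto (fun n => C * (‖(j (z - x n)).1‖ ^ 2 + ‖(j (z - x n)).2‖ ^ 2))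
      atTop (𝓝 0) := by
    simpa using ((hlim.fst_nhds.norm.pow 2).add (hlim.snd_nhds.norm.pow 2)).const_mul C
  have hΓz : ‖Γ z‖ ^ 2 ≤ 0 := ge_of_tendsto' hbound fun n => by
    simpa [LinearMap.mem_ker.mp (hx_ker n), j] using hΓ (z - x n)
  exact ⟨z, by simpa using hΓz, rfl⟩

end Normed

section InnerProduct

variable {E : Type*} [NormedAddCommGroup E] [InnerProductSpace ℂ E]

theorem im_inner_smul_self (μ : ℂ) (x : E) : (inner ℂ x (μ • x)).im = μ.im * ‖x‖ ^ 2 := by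
  rw [inner_smul_right, inner_self_eq_norm_sq_to_K]
  norm_cast
  exact im_mul_ofReal _ _

theorem im_mul_norm_le_norm_sub_smul {x y : E} (h : (inner ℂ x y).im ≤ 0) (μ : ℂ) :
    μ.im * ‖x‖ ≤ ‖y - μ • x‖ := by
  rcases (norm_nonneg x).eq_or_lt with hx | hx
  · rw [← hx, mul_zero]
    exact norm_nonneg _
  have him : (inner ℂ x (y - μ • x)).im = (inner ℂ x y).im - μ.im * ‖x‖ ^ 2 := by
    rw [inner_sub_right, sub_im, im_inner_smul_self]
  have hle : -(inner ℂ x (y - μ • x)).im ≤ ‖x‖ * ‖y - μ • x‖ :=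
    (neg_le_abs _).trans ((abs_im_le_norm _).trans (norm_inner_le_norm _ _))
  refine le_of_mul_le_mul_left ?_ hx
  nlinarith

end InnerProduct

namespace LinearPMap

def subSmul {R E : Type*} [CommRing R] [AddCommGroup E] [Module R E] (f : E →ₗ.[R] E) (μ : R) :
    f.domain →ₗ[R] E :=
  f.toFun - μ • f.domain.subtype

variable {𝕜 E : Type*} [RCLike 𝕜] [NormedAddCommGroup E] [InnerProductSpace 𝕜 E] [CompleteSpace E]

theorem exists_adjoint_eq_conj_smul {T : E →ₗ.[𝕜] E} (hT : Dense (T.domain : Set E)) {μ : 𝕜}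
    {v : E} (hv : ∀ x : T.domain, inner 𝕜 v (T x - μ • (x : E)) = 0) :
    ∃ hvT : v ∈ T.adjoint.domain, T.adjoint ⟨v, hvT⟩ = (starRingEnd 𝕜 μ) • v := by
  have hvT : ∀ x : T.domain, inner 𝕜 ((starRingEnd 𝕜 μ) • v) (x : E) = inner 𝕜 v (T x) := by
    intro x
    have := hv x
    rw [inner_sub_right, inner_smul_right, sub_eq_zero] at this
    rw [inner_smul_left, RCLike.conj_conj, this]
  exact ⟨mem_adjoint_domain_of_exists v ⟨_, hvT⟩, adjoint_apply_eq hT _ hvT⟩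

end LinearPMap

section BoundaryTriplet

variable {E Fp Fm : Type*} [NormedAddCommGroup E] [InnerProductSpace ℂ E] [CompleteSpace E]
  [NormedAddCommGroup Fp] [InnerProductSpace ℂ Fp] [NormedAddCommGroup Fm] [InnerProductSpace ℂ Fm]
  {T : E →ₗ.[ℂ] E} {Γp : T.adjoint.domain →ₗ[ℂ] Fp} {Γm : T.adjoint.domain →ₗ[ℂ] Fm}

variable (Γp Γm) in
def GreenFormula : Prop :=
  ∀ x y : T.adjoint.domain, inner ℂ (x : E) (T.adjoint y) - inner ℂ (T.adjoint x) (y : E) =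
    I * inner ℂ (Γp x) (Γp y) - I * inner ℂ (Γm x) (Γm y)

theorem two_mul_im_inner_adjoint_self (hgreen : GreenFormula Γp Γm) (x : T.adjoint.domain) :
    2 * (inner ℂ (x : E) (T.adjoint x)).im = ‖Γp x‖ ^ 2 - ‖Γm x‖ ^ 2 := by
  have h := congrArg im (hgreen x x)
  rw [← inner_conj_symm (T.adjoint x) (x : E)] at h
  simp only [sub_im, conj_im, mul_im, I_re, I_im, zero_mul, one_mul, zero_add] at h
  rw [← RCLike.re_to_complex, ← RCLike.re_to_complex, inner_self_eq_norm_sq,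
    inner_self_eq_norm_sq] at h
  linarith

theorem im_mul_norm_le_norm_adjoint_sub_smul (hgreen : GreenFormula Γp Γm)
    {x : T.adjoint.domain} (hx : Γp x = 0) (μ : ℂ) :
    μ.im * ‖(x : E)‖ ≤ ‖T.adjoint x - μ • (x : E)‖ := by
  refine im_mul_norm_le_norm_sub_smul ?_ μ
  have := two_mul_im_inner_adjoint_self hgreen x
  rw [hx, norm_zero] at this
  nlinarith [sq_nonneg ‖Γm x‖]

theorem eq_zero_of_adjoint_eq_smul (hgreen : GreenFormula Γp Γm)
    {μ : ℂ} (hμ : 0 < μ.im) {x : T.adjoint.domain} (hx : Γp x = 0)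
    (hTx : T.adjoint x = μ • (x : E)) : x = 0 := by
  have := im_mul_norm_le_norm_adjoint_sub_smul hgreen hx μ
  rw [hTx, sub_self, norm_zero] at this
  have : ‖(x : E)‖ = 0 := le_antisymm (nonpos_of_mul_nonpos_right this hμ) (norm_nonneg _)
  exact Subtype.ext (norm_eq_zero.mp this)

theorem isClosed_map_ker_adjoint_subSmul (hdense : Dense (T.domain : Set E))
    (hgreen : GreenFormula Γp Γm)
    {C : ℝ} (hbound : ∀ x, ‖Γp x‖ ^ 2 ≤ C * (‖(x : E)‖ ^ 2 + ‖T.adjoint x‖ ^ 2))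
    {μ : ℂ} (hμ : 0 < μ.im) :
    IsClosed ((LinearMap.ker Γp).map (T.adjoint.subSmul μ) : Set E) := by
  let P : E × E →L[ℂ] E := ContinuousLinearMap.snd ℂ E E - μ • ContinuousLinearMap.fst ℂ E E
  have hP : (P : E × E →ₗ[ℂ] E) ∘ₗ (T.adjoint.domain.subtype.prod T.adjoint.toFun) =
      T.adjoint.subSmul μ := rfl
  rw [← hP, Submodule.map_comp]
  refine Submodule.isClosed_map_of_norm_le
    ((LinearPMap.adjoint_isClosed hdense).isClosed_map_ker Γp hbound) P
    (K := ⟨(1 + ‖μ‖) / μ.im + 1, by positivity⟩) ?_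
  rintro _ ⟨x, hx, rfl⟩
  exact norm_prod_le_of_mul_norm_le_norm_sub_smul hμ
    (im_mul_norm_le_norm_adjoint_sub_smul hgreen hx μ)

theorem orthogonal_map_ker_adjoint_subSmul_eq_bot (hdense : Dense (T.domain : Set E))
    (hsymm : T.IsFormalAdjoint T) (hker : ∀ x : T.adjoint.domain, (x : E) ∈ T.domain → Γp x = 0)
    (hsurj : Function.Surjective fun x : T.adjoint.domain => (Γp x, Γm x))
    (hgreen : GreenFormula Γp Γm) {μ : ℂ} (hμ : 0 < μ.im) :
    ((LinearMap.ker Γp).map (T.adjoint.subSmul μ))ᗮ = ⊥ := by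
  rw [Submodule.eq_bot_iff]
  intro v hv
  have hv_perp : ∀ x : T.adjoint.domain, Γp x = 0 → inner ℂ v (T.adjoint x - μ • (x : E)) = 0 :=
    fun x hx => (Submodule.mem_orthogonal' _ v).mp hv _ (Submodule.mem_map_of_mem hx)
  have hTle : T ≤ T.adjoint := hsymm.le_adjoint hdense
  obtain ⟨hvT, hTv⟩ := LinearPMap.exists_adjoint_eq_conj_smul hdense (μ := μ) (v := v) fun x => by
    have hx := hv_perp ⟨x, hTle.1 x.2⟩ (hker _ x.2)
    rwa [← hTle.2 rfl] at hx
  set w : T.adjoint.domain := ⟨v, hvT⟩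
  have hΓm : Γm w = 0 := by
    obtain ⟨x, hx⟩ := hsurj (0, Γm w)
    obtain ⟨hxp, hxm⟩ := Prod.mk.inj hx
    have h0 : inner ℂ (T.adjoint x) v - starRingEnd ℂ μ * inner ℂ (x : E) v = 0 := by
      have := inner_eq_zero_symm.mp (hv_perp x hxp)
      rwa [inner_sub_left, inner_smul_left] at this
    have h := hgreen x w
    rw [hTv, inner_smul_right, hxp, hxm, inner_zero_left, mul_zero, zero_sub] at h
    have : I * inner ℂ (Γm w) (Γm w) = 0 := by linear_combination h + h0
    exact inner_self_eq_zero.mp ((mul_eq_zero.mp this).resolve_left I_ne_zero)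
  have him := two_mul_im_inner_adjoint_self hgreen w
  rw [hΓm, norm_zero, hTv, im_inner_smul_self, conj_im] at him
  have : ‖v‖ ^ 2 ≤ 0 := by nlinarith [sq_nonneg ‖Γp w‖]
  exact norm_eq_zero.mp (pow_eq_zero_iff two_ne_zero |>.mp (le_antisymm this (sq_nonneg _)))

end BoundaryTriplet

theorem statement10_general (T : H →ₗ.[ℂ] H)
    (hdense : Dense (T.domain : Set H))
    (hsymm : ∀ x y : T.domain, (inner ℂ (T x) ((y : H)) : ℂ) = inner ℂ ((x : H)) (T y))
    (Γp : T.adjoint.domain →ₗ[ℂ] Hp) (Γm : T.adjoint.domain →ₗ[ℂ] Hm)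
    (hsurj : Function.Surjective fun x : T.adjoint.domain => (Γp x, Γm x))
    (hker : ∀ x : T.adjoint.domain, (Γp x = 0 ∧ Γm x = 0) ↔ (x : H) ∈ T.domain)
    (hbound : ∃ C : ℝ, 0 < C ∧ ∀ x : T.adjoint.domain,
      ‖Γp x‖ ^ 2 + ‖Γm x‖ ^ 2 ≤ C * (‖(x : H)‖ ^ 2 + ‖T.adjoint x‖ ^ 2))
    (hgreen : ∀ x y : T.adjoint.domain,
      (inner ℂ ((x : H)) (T.adjoint y) : ℂ) - inner ℂ (T.adjoint x) ((y : H)) =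
        Complex.I * inner ℂ (Γp x) (Γp y) - Complex.I * inner ℂ (Γm x) (Γm y))
    (φ : Hp) (lam : ℂ) (hlam : 0 < lam.im) :
    ∃! x : T.adjoint.domain, T.adjoint x = lam • (x : H) ∧ Γp x = φ := by
  obtain ⟨C, -, hC⟩ := hbound
  set R := (LinearMap.ker Γp).map (T.adjoint.subSmul lam)
  have hR : R = ⊤ := by
    have : CompleteSpace R := (isClosed_map_ker_adjoint_subSmul hdense hgreen
      (fun x => (le_add_of_nonneg_right (sq_nonneg _)).trans (hC x)) hlam).completeSpace_coe
    exact Submodule.orthogonal_eq_bot_iff.mp (orthogonal_map_ker_adjoint_subSmul_eq_bot hdense hsymm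
      (fun x hx => ((hker x).mpr hx).1) hsurj hgreen hlam)
  obtain ⟨u, hu⟩ := hsurj (φ, 0)
  obtain ⟨w, hw, hwu⟩ := Submodule.mem_map.mp (hR ▸ Submodule.mem_top : T.adjoint.subSmul lam u ∈ R)
  have hsol : T.adjoint (u - w) = lam • ((u - w : T.adjoint.domain) : H) :=
    sub_eq_zero.mp (show T.adjoint.subSmul lam (u - w) = 0 by rw [map_sub, hwu, sub_self])
  have hbd : Γp (u - w) = φ := by
    rw [map_sub, LinearMap.mem_ker.mp hw, sub_zero, (Prod.mk.inj hu).1]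
  refine ⟨u - w, ⟨hsol, hbd⟩, fun y ⟨hy, hyφ⟩ => sub_eq_zero.mp ?_⟩
  refine eq_zero_of_adjoint_eq_smul hgreen hlam (by rw [map_sub, hyφ, hbd, sub_self]) ?_
  rw [LinearPMap.map_sub, hy, hsol, ← smul_sub]
  rfl

/-- Under the boundary triplet setup, for every `φ ∈ H₊` and every `λ` with `Im λ > 0`,
the abstract boundary value problem `T*x = λx, Γ₊x = φ` has exactly one solution
`x ∈ D(T*)`. -/
theorem statement10 (T : H →ₗ.[ℂ] H)
    (hdense : Dense (T.domain : Set H))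
    (hclosed : IsClosed (T.graph : Set (H × H)))
    (hsymm : ∀ x y : T.domain, (inner ℂ (T x) ((y : H)) : ℂ) = inner ℂ ((x : H)) (T y))
    (Γp : T.adjoint.domain →ₗ[ℂ] Hp) (Γm : T.adjoint.domain →ₗ[ℂ] Hm)
    (hsurj : Function.Surjective fun x : T.adjoint.domain => (Γp x, Γm x))
    (hker : ∀ x : T.adjoint.domain, (Γp x = 0 ∧ Γm x = 0) ↔ (x : H) ∈ T.domain)
    (hbound : ∃ C : ℝ, 0 < C ∧ ∀ x : T.adjoint.domain,
      ‖Γp x‖ ^ 2 + ‖Γm x‖ ^ 2 ≤ C * (‖(x : H)‖ ^ 2 + ‖T.adjoint x‖ ^ 2))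
    (hgreen : ∀ x y : T.adjoint.domain,
      (inner ℂ ((x : H)) (T.adjoint y) : ℂ) - inner ℂ (T.adjoint x) ((y : H)) =
        Complex.I * inner ℂ (Γp x) (Γp y) - Complex.I * inner ℂ (Γm x) (Γm y))
    (φ : Hp) (lam : ℂ) (hlam : 0 < lam.im) :
    ∃! x : T.adjoint.domain, T.adjoint x = lam • (x : H) ∧ Γp x = φ :=
  statement10_general T hdense hsymm Γp Γm hsurj hker hbound hgreen φ lam hlam

end
end

section
/- Let H be a complex Hilbert space and T a densely defined closed simple symmetric operator in H whose deficiency indices are equal and nonzero (the Hilbert dimensions of ker(T* − i) and ker(T* + i) coincide and are at least 1). Then a number λ₀ ∈ ℂ is a point of regular type for T if and only if there exists a self-adjoint extension T̃ of T such that the map x ↦ T̃x − λ₀x is a bijection from D(T̃) onto H. Equivalently, the spectral kernel of T (the complement of the set of points of regular type) equals the intersection of the spectra of all self-adjoint extensions of T. -/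
noncomputable section

open Complex

variable {H : Type*} [NormedAddCommGroup H] [InnerProductSpace ℂ H] [CompleteSpace H]

/-- The deficiency subspace `ker(T* − λ) = {x ∈ D(T*) : T*x = λx}` of `H`. -/
def defect (T : H →ₗ.[ℂ] H) (lam : ℂ) : Submodule ℂ H :=
  Submodule.map T.adjoint.domain.subtype
    (LinearMap.ker (T.adjoint.toFun - lam • T.adjoint.domain.subtype))

/-!
If some self-adjoint `S ⊇ T` has `S - λ₀` bijective, its inverse has closed graph, hence is
bounded, and this bounds `‖(T - λ₀)x‖` from below on `D(T)`.

Conversely, `S` is built as the operator with graph `{(A z, B z)}`: it is self-adjoint when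
`⟪B z, A w⟫ = ⟪A z, B w⟫` and every `(v, w)` with `⟪B z, v⟫ = ⟪A z, w⟫` for all `z` is of the form
`(A z, B z)`, and `S - λ₀` is bijective when `B - λ₀ A` is.
* Real `λ₀`: `T - λ₀` is closed and bounded below, so it has closed range and a bounded symmetric
  inverse there; extend it to a bounded self-adjoint `A` on `H` (injective since `ran A ⊇ D(T)`)
  and take `B = λ₀ A + 1`, so that `B - λ₀ A = 1`.
* Nonreal `λ₀`: `(T + i)x ↦ (T - i)x` is an isometry between the closed ranges of `T ± i`, whose
  orthogonal complements are the deficiency spaces `ker(T* ∓ i)`; an isometry between these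
  completes it to a unitary `U`. The inverse Cayley transform `A = 1 - U`, `B = i(1 + U)` gives
  `B - λ₀ A = (i - λ₀) + (i + λ₀) U`, invertible because `|i - λ₀| ≠ |i + λ₀|` puts
  `-(i - λ₀)/(i + λ₀)` off the unit circle, which contains the spectrum of `U`.
-/

open scoped InnerProductSpace

theorem LinearMap.injective_of_bound {R V E : Type*} [Ring R] [NormedAddCommGroup V] [Module R V]
    [NormedAddCommGroup E] [Module R E] (f : V →ₗ[R] E) {c : ℝ} (hc : 0 < c)
    (h : ∀ x, c * ‖x‖ ≤ ‖f x‖) : Function.Injective f :=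
  (injective_iff_map_eq_zero f).mpr fun x hx => by
    have := h x
    rw [hx, norm_zero] at this
    exact norm_le_zero_iff.mp (nonpos_of_mul_nonpos_right this hc)

theorem exists_linearIsometryEquiv_range {R V E F : Type*} [Ring R] [AddCommGroup V] [Module R V]
    [NormedAddCommGroup E] [Module R E] [NormedAddCommGroup F] [Module R F]
    {f : V →ₗ[R] E} {g : V →ₗ[R] F} (hf : Function.Injective f) (h : ∀ x, ‖f x‖ = ‖g x‖) :
    ∃ U : LinearMap.range f ≃ₗᵢ[R] LinearMap.range g,
      ∀ x, (U ⟨f x, LinearMap.mem_range_self f x⟩ : F) = g x := by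
  have hg : Function.Injective g := (injective_iff_map_eq_zero g).mpr fun x hx =>
    hf.eq_iff' (map_zero f) |>.mp (norm_eq_zero.mp (by rw [h, hx, norm_zero]))
  let e := (LinearEquiv.ofInjective f hf).symm.trans (LinearEquiv.ofInjective g hg)
  have he : ∀ x, e (LinearEquiv.ofInjective f hf x) = LinearEquiv.ofInjective g hg x :=
    fun x => by simp [e]
  refine ⟨{ e with norm_map' := fun y => ?_ }, fun x => congrArg Subtype.val (he x)⟩
  obtain ⟨x, rfl⟩ := (LinearEquiv.ofInjective f hf).surjective y
  exact congrArg norm (he x) |>.trans (h x).symm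

section Banach

variable {𝕜 E : Type*} [NontriviallyNormedField 𝕜] [NormedAddCommGroup E] [NormedSpace 𝕜 E]
  [CompleteSpace E]

namespace LinearPMap

theorem isClosed_range_sub_smul {T : E →ₗ.[𝕜] E} (hT : T.IsClosed) {μ : 𝕜} {c : ℝ}
    (hc : 0 < c) (hb : ∀ x : T.domain, c * ‖(x : E)‖ ≤ ‖T x - μ • (x : E)‖) :
    _root_.IsClosed (LinearMap.range (T.toFun - μ • T.domain.subtype) : Set E) := by
  have : CompleteSpace T.graph := hT.completeSpace_coe
  let f : T.graph →L[𝕜] E :=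
    (ContinuousLinearMap.snd 𝕜 E E - μ • ContinuousLinearMap.fst 𝕜 E E).comp T.graph.subtypeL
  have hf : ∀ x : T.domain, f ⟨((x : E), T x), T.mem_graph x⟩ = T x - μ • (x : E) := fun _ => rfl
  have hrange : Set.range f = LinearMap.range (T.toFun - μ • T.domain.subtype) := by
    ext y
    constructor
    · rintro ⟨⟨⟨a, b⟩, hp⟩, rfl⟩
      obtain ⟨x, rfl, rfl⟩ := T.mem_graph_iff.mp hp
      exact ⟨x, rfl⟩
    · rintro ⟨x, rfl⟩
      exact ⟨_, hf x⟩
  -- the graph is complete, and `T - μ` is bounded below in the graph norm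
  have hanti : AntilipschitzWith ((1 + ‖μ‖) / c + 1).toNNReal f := by
    refine f.antilipschitz_of_bound fun ⟨⟨a, b⟩, hp⟩ => ?_
    obtain ⟨x, rfl, rfl⟩ := T.mem_graph_iff.mp hp
    rw [hf]
    set y := ‖T x - μ • (x : E)‖
    have hx : ‖(x : E)‖ ≤ y / c := by rw [le_div_iff₀ hc, mul_comm]; exact hb x
    have hTx : ‖T x‖ ≤ y + ‖μ‖ * ‖(x : E)‖ := by
      simpa [norm_smul] using norm_le_norm_sub_add (T x) (μ • (x : E))
    have hμx : ‖μ‖ * ‖(x : E)‖ ≤ ‖μ‖ * (y / c) := by gcongr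
    have hy : 0 ≤ y := norm_nonneg _
    have hμy : 0 ≤ ‖μ‖ * (y / c) := by positivity
    have hK : ((1 + ‖μ‖) / c + 1) * y = y / c + ‖μ‖ * (y / c) + y := by ring
    change ‖((x : E), T x)‖ ≤ _ * _
    rw [Real.coe_toNNReal _ (by positivity), norm_prod_le_iff, hK]
    constructor <;> dsimp only <;> linarith [norm_nonneg (x : E)]
  rw [← hrange]
  exact hanti.isClosed_range f.uniformContinuous

theorem exists_bound_of_bijective_sub_smul {S : E →ₗ.[𝕜] E} (hS : S.IsClosed) {μ : 𝕜}
    (hbij : Function.Bijective fun x : S.domain => S x - μ • (x : E)) :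
    ∃ c : ℝ, 0 < c ∧ ∀ x : S.domain, c * ‖(x : E)‖ ≤ ‖S x - μ • (x : E)‖ := by
  let e : S.domain ≃ₗ[𝕜] E := .ofBijective (S.toFun - μ • S.domain.subtype) hbij
  have he : ∀ x, e x = S x - μ • (x : E) := fun _ => rfl
  let R : E →ₗ[𝕜] E := S.domain.subtype ∘ₗ e.symm.toLinearMap
  have hgraph : (R.graph : Set (E × E)) =
      (fun p : E × E => (p.2, p.1 + μ • p.2)) ⁻¹' (S.graph : Set (E × E)) := by
    ext ⟨y, x⟩
    simp only [Set.mem_preimage, SetLike.mem_coe, LinearMap.mem_graph_iff, S.mem_graph_iff]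
    constructor
    · rintro rfl
      refine ⟨e.symm y, rfl, ?_⟩
      rw [← sub_eq_iff_eq_add]
      exact e.apply_symm_apply y
    · rintro ⟨x', rfl, hx'⟩
      rw [← sub_eq_iff_eq_add, ← he] at hx'
      simp [R, ← hx']
  have hR : Continuous R := R.continuous_of_isClosed_graph <| by
    rw [hgraph]; exact hS.preimage (by fun_prop)
  obtain ⟨C, hC, hRC⟩ := (⟨R, hR⟩ : E →L[𝕜] E).bound
  refine ⟨C⁻¹, inv_pos.mpr hC, fun x => ?_⟩
  have hx : R (e x) = x := by simp [R]
  rw [inv_mul_le_iff₀ hC, ← he, ← hx]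
  exact hRC (e x)

end LinearPMap

end Banach

namespace LinearPMap

section Param

variable {R V E F : Type*} [Ring R] [AddCommGroup V] [Module R V] [AddCommGroup E] [Module R E]
  [AddCommGroup F] [Module R F]

/-- The operator with graph `{(A z, B z)}` when `A` is injective (junk otherwise). -/
def ofParam (A : V →ₗ[R] E) (B : V →ₗ[R] F) : E →ₗ.[R] F :=
  (LinearMap.range (A.prod B)).toLinearPMap

variable {A : V →ₗ[R] E}

theorem graph_ofParam (B : V →ₗ[R] F) (hA : Function.Injective A) :
    (ofParam A B).graph = LinearMap.range (A.prod B) := by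
  refine Submodule.toLinearPMap_graph_eq _ ?_
  rintro _ ⟨z, rfl⟩ hz
  simp [show z = 0 from hA (by simpa using hz)]

theorem mem_graph_ofParam (B : V →ₗ[R] F) (hA : Function.Injective A) {x : E} {y : F} :
    (x, y) ∈ (ofParam A B).graph ↔ ∃ z, A z = x ∧ B z = y := by
  simp [graph_ofParam B hA]

theorem domain_ofParam (B : V →ₗ[R] F) : (ofParam A B).domain = LinearMap.range A := by
  rw [ofParam, Submodule.toLinearPMap_domain, ← LinearMap.range_comp, LinearMap.fst_prod]

theorem ofParam_apply (B : V →ₗ[R] F) (hA : Function.Injective A) (z : V)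
    (hz : A z ∈ (ofParam A B).domain) :
    ofParam A B ⟨A z, hz⟩ = B z :=
  (ofParam A B).mem_graph_snd_inj ((ofParam A B).mem_graph _)
    ((mem_graph_ofParam B hA).mpr ⟨z, rfl, rfl⟩) rfl

theorem le_ofParam (B : V →ₗ[R] F) (hA : Function.Injective A) {T : E →ₗ.[R] F}
    (hext : ∀ x : T.domain, ∃ z, A z = x ∧ B z = T x) : T ≤ ofParam A B := by
  refine le_of_le_graph fun ⟨x, y⟩ hp => ?_
  obtain ⟨x, rfl, rfl⟩ := T.mem_graph_iff.mp hp
  exact (mem_graph_ofParam B hA).mpr (hext x)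

theorem bijective_ofParam_sub_smul (B : V →ₗ[R] E) (hA : Function.Injective A) {μ : R}
    (h : Function.Bijective fun z => B z - μ • A z) :
    Function.Bijective fun x : (ofParam A B).domain => ofParam A B x - μ • (x : E) := by
  let φ : V → (ofParam A B).domain := fun z => ⟨A z, by rw [domain_ofParam]; exact ⟨z, rfl⟩⟩
  have hφ : Function.Bijective φ := by
    refine ⟨fun z w hzw => hA (congrArg Subtype.val hzw), fun ⟨x, hx⟩ => ?_⟩
    obtain ⟨z, rfl⟩ : x ∈ LinearMap.range A := by rwa [← domain_ofParam B]
    exact ⟨z, rfl⟩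
  refine (Function.Bijective.of_comp_iff _ hφ).mp ?_
  convert h using 1
  funext z
  exact congrArg (· - μ • A z) (ofParam_apply B hA z _)

end Param

section Order

variable {R E F : Type*} [Ring R] [AddCommGroup E] [Module R E] [AddCommGroup F] [Module R F]

theorem le_domRestrict {T S : E →ₗ.[R] F} {D : Submodule R E} (h : T ≤ S) (hD : T.domain ≤ D) :
    T ≤ S.domRestrict D :=
  ⟨le_inf hD h.1, fun _ y hxy => (h.2 (y := ⟨y, y.2.2⟩) hxy).trans (domRestrict_apply rfl).symm⟩

theorem domRestrict_domain_eq_of_le {T S : E →ₗ.[R] F} (h : S ≤ T) : T.domRestrict S.domain = S :=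
  (eq_of_le_of_domain_eq (le_domRestrict h le_rfl) (by simp [domRestrict_domain, h.1])).symm

theorem bijective_sub_smul_iff_of_le {S T : E →ₗ.[R] E} (h : S ≤ T) (μ : R) :
    (Function.Bijective fun x : S.domain => S x - μ • (x : E)) ↔
      ∀ y, ∃! x : T.domain, (x : E) ∈ S.domain ∧ T x - μ • (x : E) = y := by
  have hST : ∀ x : S.domain, S x = T ⟨x, h.1 x.2⟩ := fun x => h.2 rfl
  constructor
  · intro hb y
    obtain ⟨x, rfl⟩ := hb.2 y
    refine ⟨⟨x, h.1 x.2⟩, ⟨x.2, by simp [hST]⟩, fun x' ⟨hx'S, hx'⟩ => ?_⟩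
    have : (⟨x', hx'S⟩ : S.domain) = x := hb.1 (by simpa [hST] using hx')
    exact Subtype.ext (by simpa using congrArg Subtype.val this)
  · intro hu
    refine ⟨fun x x' hxx' => ?_, fun y => ?_⟩
    · have := (hu (S x' - μ • (x' : E))).unique (y₁ := ⟨x, h.1 x.2⟩) (y₂ := ⟨x', h.1 x'.2⟩)
        ⟨x.2, by simpa [hST] using hxx'⟩ ⟨x'.2, by simp [hST]⟩
      exact Subtype.ext (by simpa using congrArg Subtype.val this)
    · obtain ⟨x, ⟨hxS, hx⟩, -⟩ := hu y
      exact ⟨⟨x, hxS⟩, by simpa [hST] using hx⟩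

end Order

end LinearPMap

section Hilbert

variable {𝕜 E : Type*} [RCLike 𝕜] [NormedAddCommGroup E] [InnerProductSpace 𝕜 E]

theorem exists_linearIsometryEquiv_extension {K₁ K₂ : Submodule 𝕜 E} [K₁.HasOrthogonalProjection]
    [K₂.HasOrthogonalProjection] (U₀ : K₁ ≃ₗᵢ[𝕜] K₂) (J : K₁ᗮ ≃ₗᵢ[𝕜] K₂ᗮ) :
    ∃ U : E ≃ₗᵢ[𝕜] E, ∀ u : K₁, U u = U₀ u :=
  ⟨K₁.orthogonalDecomposition.trans
      ((U₀.withLpProdCongr 2 J).trans K₂.orthogonalDecomposition.symm),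
    fun u => by simp⟩

variable [CompleteSpace E]

theorem exists_isSelfAdjoint_extension (K : Submodule 𝕜 E) [K.HasOrthogonalProjection]
    (S : K →L[𝕜] E) (hS : ∀ u v : K, ⟪S u, (v : E)⟫_𝕜 = ⟪(u : E), S v⟫_𝕜) :
    ∃ A : E →L[𝕜] E, IsSelfAdjoint A ∧ ∀ u : K, A u = S u := by
  have hP : IsSelfAdjoint K.starProjection := isSelfAdjoint_starProjection K
  let B := S ∘L K.orthogonalProjectionOnto
  have hPB : star B * K.starProjection = K.starProjection * B := by
    rw [← hP.star_eq, ← star_mul, hP.star_eq]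
    refine (ContinuousLinearMap.isSelfAdjoint_iff_isSymmetric.mpr fun x y => ?_).star_eq
    change ⟪K.starProjection (B x), y⟫_𝕜 = ⟪x, K.starProjection (B y)⟫_𝕜
    rw [K.inner_starProjection_left_eq_right, ← K.inner_starProjection_left_eq_right x]
    exact hS _ _
  refine ⟨B + star B * (1 - K.starProjection), ?_, fun u => by simp [B]⟩
  rw [IsSelfAdjoint, star_add, star_mul, star_star, star_sub, star_one, hP.star_eq, sub_mul,
    mul_sub, one_mul, mul_one, hPB]
  abel

theorem LinearIsometryEquiv.bijective_smul_add_smul (U : E ≃ₗᵢ[𝕜] E) {a b : 𝕜} (h : ‖a‖ ≠ ‖b‖) :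
    Function.Bijective fun z => a • z + b • U z := by
  rcases eq_or_ne b 0 with rfl | hb
  · simpa using (Ne.isUnit (by rintro rfl; simp at h) : IsUnit a).smul_bijective (β := E)
  -- `-a / b` lies off the unit circle, hence outside the spectrum of the unitary `U`
  have hspec : -a / b ∉ spectrum 𝕜 (U : E →L[𝕜] E) := fun hmem => by
    have := spectrum.norm_eq_one_of_unitary (Unitary.linearIsometryEquiv.symm U).2 hmem
    rw [norm_div, norm_neg, div_eq_one_iff_eq (norm_ne_zero_iff.mpr hb)] at this
    exact h this
  have hunit := ContinuousLinearMap.isUnit_iff_bijective.mp (spectrum.notMem_iff.mp hspec)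
  convert (neg_ne_zero.mpr hb).isUnit.smul_bijective.comp hunit using 1
  funext z
  simp [Algebra.algebraMap_eq_smul_one, smul_sub, smul_smul, mul_div_cancel₀ _ hb]
  abel

namespace LinearPMap

theorem isSelfAdjoint_ofParam {V : Type*} [AddCommGroup V] [Module 𝕜 V] {A B : V →ₗ[𝕜] E}
    (hA : Function.Injective A)
    (hdense : Dense (LinearMap.range A : Set E))
    (hsym : ∀ z w, ⟪B z, A w⟫_𝕜 = ⟪A z, B w⟫_𝕜)
    (hmax : ∀ v w, (∀ z, ⟪B z, v⟫_𝕜 = ⟪A z, w⟫_𝕜) → ∃ z, A z = v ∧ B z = w) :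
    IsSelfAdjoint (ofParam A B) := by
  rw [isSelfAdjoint_def]
  refine eq_of_eq_graph ?_
  rw [adjoint_graph_eq_graph_adjoint (by rwa [domain_ofParam])]
  ext ⟨v, w⟩
  simp only [Submodule.mem_adjoint_iff, mem_graph_ofParam B hA, sub_eq_zero]
  constructor
  · intro h
    exact hmax v w fun z => h _ _ ⟨z, rfl, rfl⟩
  · rintro ⟨z, rfl, rfl⟩ _ _ ⟨w, rfl, rfl⟩
    exact hsym w z

theorem adjoint_le_adjoint {T S : E →ₗ.[𝕜] E} (hT : Dense (T.domain : Set E)) (h : T ≤ S) :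
    S† ≤ T† := by
  refine le_of_le_graph ?_
  rw [adjoint_graph_eq_graph_adjoint hT, adjoint_graph_eq_graph_adjoint (hT.mono h.1)]
  intro p hp
  rw [Submodule.mem_adjoint_iff] at hp ⊢
  exact fun a b hab => hp a b (le_graph_of_le h hab)

theorem exists_selfAdjoint_domain_iff {T : E →ₗ.[𝕜] E} (hT : Dense (T.domain : Set E))
    (hsymm : T.IsFormalAdjoint T) (μ : 𝕜) :
    (∃ D : Submodule 𝕜 E, T.domain ≤ D ∧ D ≤ T†.domain ∧
        (T†.domRestrict D)† = T†.domRestrict D ∧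
        ∀ y : E, ∃! x : T†.domain, (x : E) ∈ D ∧ T† x - μ • (x : E) = y) ↔
      ∃ S : E →ₗ.[𝕜] E, T ≤ S ∧ IsSelfAdjoint S ∧
        Function.Bijective fun x : S.domain => S x - μ • (x : E) := by
  constructor
  · rintro ⟨D, hTD, hDT, hsa, hu⟩
    have hdom : (T†.domRestrict D).domain = D := by
      rw [domRestrict_domain, inf_eq_left.mpr hDT]
    refine ⟨T†.domRestrict D, le_domRestrict (hsymm.le_adjoint hT) hTD, hsa, ?_⟩
    rw [bijective_sub_smul_iff_of_le domRestrict_le, hdom]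
    exact hu
  · rintro ⟨S, hTS, hS, hb⟩
    have hST : S ≤ T† := isSelfAdjoint_def.mp hS ▸ adjoint_le_adjoint hT hTS
    refine ⟨S.domain, hTS.1, hST.1, ?_, (bijective_sub_smul_iff_of_le hST μ).mp hb⟩
    rw [domRestrict_domain_eq_of_le hST]
    exact hS

theorem exists_isSelfAdjoint_leftInverse {T : E →ₗ.[𝕜] E}
    (hT : Dense (T.domain : Set E)) (hclosed : T.IsClosed) (hsymm : T.IsFormalAdjoint T) {μ : 𝕜}
    (hμ : starRingEnd 𝕜 μ = μ) {c : ℝ} (hc : 0 < c)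
    (hb : ∀ x : T.domain, c * ‖(x : E)‖ ≤ ‖T x - μ • (x : E)‖) :
    ∃ A : E →L[𝕜] E, IsSelfAdjoint A ∧ Function.Injective A ∧
      ∀ x : T.domain, A (T x - μ • (x : E)) = x := by
  let F := T.toFun - μ • T.domain.subtype
  have hF : ∀ x, F x = T x - μ • (x : E) := fun _ => rfl
  have hFinj : Function.Injective F := F.injective_of_bound hc hb
  let K := LinearMap.range F
  have : CompleteSpace K := (isClosed_range_sub_smul hclosed hc hb).completeSpace_coe
  let e := LinearEquiv.ofInjective F hFinj
  have he : ∀ x, ((e x : K) : E) = F x := fun _ => rfl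
  let S : K →L[𝕜] E := (T.domain.subtype ∘ₗ e.symm.toLinearMap).mkContinuous c⁻¹ fun y => by
    obtain ⟨x, rfl⟩ := e.surjective y
    change ‖((e.symm (e x)) : E)‖ ≤ c⁻¹ * ‖((e x : K) : E)‖
    rw [e.symm_apply_apply, he, hF, le_inv_mul_iff₀ hc]
    exact hb x
  have hS : ∀ x, S (e x) = x := fun x => by simp [S]
  have hSsymm : ∀ u v : K, ⟪S u, (v : E)⟫_𝕜 = ⟪(u : E), S v⟫_𝕜 := by
    intro u v
    obtain ⟨x, rfl⟩ := e.surjective u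
    obtain ⟨y, rfl⟩ := e.surjective v
    simp only [hS, he, hF, inner_sub_left, inner_sub_right, inner_smul_left, inner_smul_right, hμ]
    rw [hsymm]
  obtain ⟨A, hA, hAS⟩ := _root_.exists_isSelfAdjoint_extension K S hSsymm
  have hAF : ∀ x : T.domain, A (T x - μ • (x : E)) = x := fun x => by rw [← hF, ← he, hAS, hS]
  -- `ker A ⊥ ran A ⊇ D(T)`, which is dense
  refine ⟨A, hA, (injective_iff_map_eq_zero A).mpr fun z hz => ?_, hAF⟩
  refine hT.eq_zero_of_inner_left 𝕜 fun x hx => ?_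
  have hxA : x = A (T ⟨x, hx⟩ - μ • x) := (hAF ⟨x, hx⟩).symm
  have hAz := hA.isSymmetric z (T ⟨x, hx⟩ - μ • x)
  rw [ContinuousLinearMap.coe_coe, hz, inner_zero_left] at hAz
  rw [hxA, ← hAz]

theorem exists_isSelfAdjoint_extension_of_leftInverse {T : E →ₗ.[𝕜] E}
    (hT : Dense (T.domain : Set E)) {A : E →L[𝕜] E} (hA : IsSelfAdjoint A)
    (hAinj : Function.Injective A) {μ : 𝕜} (hμ : starRingEnd 𝕜 μ = μ)
    (hAT : ∀ x : T.domain, A (T x - μ • (x : E)) = x) :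
    ∃ S : E →ₗ.[𝕜] E, T ≤ S ∧ IsSelfAdjoint S ∧
      Function.Bijective fun x : S.domain => S x - μ • (x : E) := by
  have hAsymm : ∀ z w, ⟪A z, w⟫_𝕜 = ⟪z, A w⟫_𝕜 := hA.isSymmetric
  let B : E →ₗ[𝕜] E := μ • (A : E →ₗ[𝕜] E) + LinearMap.id
  have hB : ∀ z, B z = μ • A z + z := fun _ => rfl
  have hext : ∀ x : T.domain, ∃ z, A z = x ∧ B z = T x :=
    fun x => ⟨T x - μ • (x : E), hAT x, by rw [hB, hAT x]; abel⟩
  refine ⟨ofParam (A : E →ₗ[𝕜] E) B, le_ofParam B hAinj hext,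
    isSelfAdjoint_ofParam hAinj ?_ (fun z w => ?_) (fun v w h => ?_),
    bijective_ofParam_sub_smul B hAinj ?_⟩
  · refine hT.mono fun x hx => ?_
    obtain ⟨z, hz, -⟩ := hext ⟨x, hx⟩
    exact ⟨z, hz⟩
  · simp only [ContinuousLinearMap.coe_coe]
    rw [hB, hB, inner_add_left, inner_smul_left, hμ, inner_add_right, inner_smul_right, hAsymm z w]
  · have hw : μ • A v + v = A w := ext_inner_left 𝕜 fun z => by
      simpa [hB, inner_add_right, inner_smul_right, ← hAsymm, inner_add_left, inner_smul_left, hμ]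
        using h z
    refine ⟨w - μ • v, ?_, ?_⟩
    · simp [← hw]
    · rw [hB, A.map_sub, A.map_smul, ← hw]
      module
  · convert Function.bijective_id with z
    simp [hB]

end LinearPMap

end Hilbert

section Cayley

variable {E : Type*} [NormedAddCommGroup E] [InnerProductSpace ℂ E]

theorem LinearPMap.IsFormalAdjoint.norm_sub_smul_sq {T : E →ₗ.[ℂ] E} (hT : T.IsFormalAdjoint T)
    (x : T.domain) (μ : ℂ) :
    ‖T x - μ • (x : E)‖ ^ 2 = ‖T x - (μ.re : ℂ) • (x : E)‖ ^ 2 + μ.im ^ 2 * ‖(x : E)‖ ^ 2 := by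
  set a := T x - (μ.re : ℂ) • (x : E)
  have hreal : (⟪a, x⟫_ℂ).im = 0 := by
    rw [← conj_eq_iff_im, inner_conj_symm, inner_sub_left, inner_sub_right, inner_smul_left,
      inner_smul_right, conj_ofReal, hT x x]
  have hsplit : T x - μ • (x : E) = a - ((μ.im : ℂ) * I) • (x : E) := by
    conv_lhs => rw [← re_add_im μ]
    module
  have hre : RCLike.re (((μ.im : ℂ) * I) * ⟪a, x⟫_ℂ) = 0 := by simp [hreal]
  have hnorm : ‖(μ.im : ℂ) * I‖ ^ 2 = μ.im ^ 2 := by simp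
  rw [hsplit, @norm_sub_sq ℂ, inner_smul_right, hre, norm_smul, mul_pow, hnorm]
  ring

theorem LinearIsometryEquiv.inner_cayley_comm (U : E ≃ₗᵢ[ℂ] E) (z w : E) :
    ⟪I • (z + U z), w - U w⟫_ℂ = ⟪z - U z, I • (w + U w)⟫_ℂ := by
  simp only [inner_smul_left, inner_smul_right, inner_add_left, inner_add_right, inner_sub_left,
    inner_sub_right, U.inner_map_map, conj_I]
  ring

theorem LinearIsometryEquiv.exists_cayley_eq (U : E ≃ₗᵢ[ℂ] E) {v w : E}
    (h : ∀ z, ⟪I • (z + U z), v⟫_ℂ = ⟪z - U z, w⟫_ℂ) :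
    ∃ z, z - U z = v ∧ I • (z + U z) = w := by
  have hU : U (w + I • v) = w - I • v := by
    refine ext_inner_left ℂ fun y => ?_
    obtain ⟨z, rfl⟩ := U.surjective y
    rw [U.inner_map_map]
    have := h z
    simp only [inner_smul_left, inner_add_left, inner_sub_left, conj_I] at this
    simp only [inner_add_right, inner_sub_right, inner_smul_right]
    linear_combination -this
  have h2I : (2 * I : ℂ) ≠ 0 := by simp
  refine ⟨(2 * I)⁻¹ • (w + I • v), ?_, ?_⟩
  · rw [map_smul, hU, ← smul_sub, show w + I • v - (w - I • v) = (2 * I) • v by module,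
      inv_smul_smul₀ h2I]
  · rw [map_smul, hU, ← smul_add, smul_smul, show w + I • v + (w - I • v) = (2 : ℂ) • w by module,
      smul_smul, show I * (2 * I)⁻¹ * 2 = 1 by field_simp, one_smul]

theorem norm_I_sub_ne_norm_I_add {μ : ℂ} (hμ : μ.im ≠ 0) : ‖I - μ‖ ≠ ‖I + μ‖ := by
  intro h
  have := congrArg (· ^ 2) h
  simp only [← Complex.normSq_eq_norm_sq, Complex.normSq_apply] at this
  simp at this
  apply hμ
  nlinarith

variable [CompleteSpace E]

theorem LinearPMap.exists_isSelfAdjoint_extension_of_cayley {T : E →ₗ.[ℂ] E}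
    (hT : Dense (T.domain : Set E)) (U : E ≃ₗᵢ[ℂ] E)
    (hU : ∀ x : T.domain, U (T x + I • (x : E)) = T x - I • (x : E)) {μ : ℂ} (hμ : μ.im ≠ 0) :
    ∃ S : E →ₗ.[ℂ] E, T ≤ S ∧ IsSelfAdjoint S ∧
      Function.Bijective fun x : S.domain => S x - μ • (x : E) := by
  let A : E →ₗ[ℂ] E := LinearMap.id - U.toLinearEquiv.toLinearMap
  let B : E →ₗ[ℂ] E := I • (LinearMap.id + U.toLinearEquiv.toLinearMap)
  have hA : ∀ z, A z = z - U z := fun _ => rfl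
  have hB : ∀ z, B z = I • (z + U z) := fun _ => rfl
  have h2I : (2 * I : ℂ) ≠ 0 := by simp
  have hext : ∀ x : T.domain, ∃ z, A z = x ∧ B z = T x := fun x => by
    refine ⟨(2 * I)⁻¹ • (T x + I • (x : E)), ?_, ?_⟩
    · rw [hA, _root_.map_smul, hU, ← smul_sub,
        show T x + I • (x : E) - (T x - I • (x : E)) = (2 * I) • (x : E) by module,
        inv_smul_smul₀ h2I]
    · rw [hB, _root_.map_smul, hU, ← smul_add, smul_smul,
        show T x + I • (x : E) + (T x - I • (x : E)) = (2 : ℂ) • T x by module, smul_smul,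
        show I * (2 * I)⁻¹ * 2 = 1 by field_simp, one_smul]
  -- a vector fixed by `U` is orthogonal to `(U - 1)(T + i) x = -2 i x` for all `x ∈ D(T)`
  have hAinj : Function.Injective A := (injective_iff_map_eq_zero A).mpr fun z hz => by
    rw [hA, sub_eq_zero, eq_comm] at hz
    refine hT.eq_zero_of_inner_left ℂ fun x hx => ?_
    have h := U.inner_map_map z (T ⟨x, hx⟩ + I • x)
    rw [hz, hU ⟨x, hx⟩, ← sub_eq_zero, ← inner_sub_right,
      show T ⟨x, hx⟩ - I • x - (T ⟨x, hx⟩ + I • x) = (-2 * I) • x by module, inner_smul_right] at h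
    exact (mul_eq_zero.mp h).resolve_left (by simp)
  refine ⟨ofParam A B, le_ofParam B hAinj hext,
    isSelfAdjoint_ofParam hAinj ?_ (fun z w => U.inner_cayley_comm z w)
      (fun v w h => U.exists_cayley_eq h),
    bijective_ofParam_sub_smul B hAinj ?_⟩
  · refine hT.mono fun x hx => ?_
    obtain ⟨z, hz, -⟩ := hext ⟨x, hx⟩
    exact ⟨z, hz⟩
  · convert U.bijective_smul_add_smul (norm_I_sub_ne_norm_I_add hμ) using 2 with z
    rw [hA, hB]
    module

end Cayley

theorem defect_eq_orthogonal_range {T : H →ₗ.[ℂ] H} (hT : Dense (T.domain : Set H)) (μ : ℂ) :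
    defect T μ = (LinearMap.range (T.toFun - (starRingEnd ℂ μ) • T.domain.subtype))ᗮ := by
  ext y
  simp only [defect, Submodule.mem_map, LinearMap.mem_ker, LinearMap.sub_apply,
    LinearMap.smul_apply, sub_eq_zero, Submodule.mem_orthogonal', LinearMap.mem_range]
  constructor
  · rintro ⟨y, hy, rfl⟩ _ ⟨x, rfl⟩
    change ⟪(y : H), T x - starRingEnd ℂ μ • (x : H)⟫_ℂ = 0
    rw [inner_sub_right, ← LinearPMap.adjoint_isFormalAdjoint hT y x,
      show T.adjoint y = μ • (y : H) from hy, inner_smul_left, inner_smul_right, sub_self]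
  · intro h
    have key : ∀ x : T.domain, ⟪μ • y, (x : H)⟫_ℂ = ⟪y, T x⟫_ℂ := fun x => by
      have hx : ⟪y, T x - starRingEnd ℂ μ • (x : H)⟫_ℂ = 0 := h _ ⟨x, rfl⟩
      rw [inner_sub_right, inner_smul_right, sub_eq_zero] at hx
      rw [inner_smul_left, hx]
    have hy : y ∈ T.adjoint.domain := LinearPMap.mem_adjoint_domain_of_exists y ⟨μ • y, key⟩
    exact ⟨⟨y, hy⟩, LinearPMap.adjoint_apply_eq hT ⟨y, hy⟩ key, rfl⟩

theorem exists_cayley_unitary {T : H →ₗ.[ℂ] H} (hT : Dense (T.domain : Set H))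
    (hclosed : T.IsClosed) (hsymm : T.IsFormalAdjoint T)
    (hdef : Nonempty (defect T I ≃ₗᵢ[ℂ] defect T (-I))) :
    ∃ U : H ≃ₗᵢ[ℂ] H, ∀ x : T.domain, U (T x + I • (x : H)) = T x - I • (x : H) := by
  let Fp := T.toFun - starRingEnd ℂ I • T.domain.subtype
  let Fm := T.toFun - starRingEnd ℂ (-I) • T.domain.subtype
  have hFp : ∀ x, Fp x = T x + I • (x : H) := fun x => by simp [Fp, sub_eq_add_neg]
  have hFm : ∀ x, Fm x = T x - I • (x : H) := fun x => by simp [Fm]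
  have hsq : ∀ μ : ℂ, μ.re = 0 → μ.im ^ 2 = 1 → ∀ x : T.domain,
      ‖T x - μ • (x : H)‖ ^ 2 = ‖T x‖ ^ 2 + ‖(x : H)‖ ^ 2 := fun μ hre him x => by
    simpa [hre, him] using hsymm.norm_sub_smul_sq x μ
  have hb : ∀ μ : ℂ, μ.re = 0 → μ.im ^ 2 = 1 → ∀ x : T.domain,
      1 * ‖(x : H)‖ ≤ ‖T x - μ • (x : H)‖ := fun μ hre him x => by
    rw [one_mul, ← pow_le_pow_iff_left₀ (norm_nonneg _) (norm_nonneg _) two_ne_zero, hsq μ hre him]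
    nlinarith [norm_nonneg (T x)]
  have hbp := hb (starRingEnd ℂ I) (by simp) (by simp)
  have hbm := hb (starRingEnd ℂ (-I)) (by simp) (by simp)
  have heq : ∀ x, ‖Fp x‖ = ‖Fm x‖ := fun x => by
    rw [← sq_eq_sq₀ (norm_nonneg _) (norm_nonneg _)]
    exact (hsq _ (by simp) (by simp) x).trans (hsq _ (by simp) (by simp) x).symm
  obtain ⟨U₀, hU₀⟩ := exists_linearIsometryEquiv_range (Fp.injective_of_bound one_pos hbp) heq
  have : CompleteSpace (LinearMap.range Fp) :=
    (LinearPMap.isClosed_range_sub_smul hclosed one_pos hbp).completeSpace_coe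
  have : CompleteSpace (LinearMap.range Fm) :=
    (LinearPMap.isClosed_range_sub_smul hclosed one_pos hbm).completeSpace_coe
  let J : (LinearMap.range Fp)ᗮ ≃ₗᵢ[ℂ] (LinearMap.range Fm)ᗮ :=
    (LinearIsometryEquiv.ofEq _ _ (defect_eq_orthogonal_range hT I).symm).trans
      (hdef.some.trans (LinearIsometryEquiv.ofEq _ _ (defect_eq_orthogonal_range hT (-I))))
  obtain ⟨U, hU⟩ := exists_linearIsometryEquiv_extension U₀ J
  exact ⟨U, fun x => by rw [← hFp, ← hFm, ← hU₀, ← hU]⟩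

theorem statement14_general (T : H →ₗ.[ℂ] H)
    (hdense : Dense (T.domain : Set H))
    (hclosed : IsClosed (T.graph : Set (H × H)))
    (hsymm : ∀ x y : T.domain, (inner ℂ (T x) ((y : H)) : ℂ) = inner ℂ ((x : H)) (T y))
    (hdefEq : Nonempty ((defect T Complex.I) ≃ₗᵢ[ℂ] (defect T (-Complex.I))))
    (lam0 : ℂ) :
    (∃ c : ℝ, 0 < c ∧ ∀ x : T.domain, c * ‖(x : H)‖ ≤ ‖T x - lam0 • (x : H)‖) ↔
      ∃ D : Submodule ℂ H, T.domain ≤ D ∧ D ≤ T.adjoint.domain ∧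
        (T.adjoint.domRestrict D).adjoint = T.adjoint.domRestrict D ∧
        ∀ y : H, ∃! x : T.adjoint.domain,
          (x : H) ∈ D ∧ T.adjoint x - lam0 • (x : H) = y := by
  rw [LinearPMap.exists_selfAdjoint_domain_iff hdense hsymm]
  constructor
  · rintro ⟨c, hc, hb⟩
    rcases eq_or_ne lam0.im 0 with hre | him
    · have hconj : starRingEnd ℂ lam0 = lam0 := conj_eq_iff_im.mpr hre
      obtain ⟨A, hA, hAinj, hAT⟩ :=
        LinearPMap.exists_isSelfAdjoint_leftInverse hdense hclosed hsymm hconj hc hb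
      exact LinearPMap.exists_isSelfAdjoint_extension_of_leftInverse hdense hA hAinj hconj hAT
    · obtain ⟨U, hU⟩ := exists_cayley_unitary hdense hclosed hsymm hdefEq
      exact LinearPMap.exists_isSelfAdjoint_extension_of_cayley hdense U hU him
  · rintro ⟨S, hTS, hS, hbij⟩
    obtain ⟨c, hc, hb⟩ := LinearPMap.exists_bound_of_bijective_sub_smul hS.isClosed hbij
    exact ⟨c, hc, fun x => by rw [hTS.2 (y := ⟨x, hTS.1 x.2⟩) rfl]; exact hb ⟨x, hTS.1 x.2⟩⟩

/-- Let `T` be a densely defined closed *simple* symmetric operator whose deficiency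
subspaces `ker(T* − i)` and `ker(T* + i)` have the same (nonzero) Hilbert dimension, i.e.
they are isometrically isomorphic and nonzero.  Then `λ₀ ∈ ℂ` is a point of regular type
for `T` iff some self-adjoint extension `T̃ = T*|_D` of `T` has `λ₀` in its resolvent set
(`x ↦ T̃x − λ₀x` is a bijection from `D(T̃)` onto `H`); equivalently, the spectral kernel
of `T` is the intersection of the spectra of all self-adjoint extensions of `T`. -/
theorem statement14 (T : H →ₗ.[ℂ] H)
    (hdense : Dense (T.domain : Set H))
    (hclosed : IsClosed (T.graph : Set (H × H)))
    (hsymm : ∀ x y : T.domain, (inner ℂ (T x) ((y : H)) : ℂ) = inner ℂ ((x : H)) (T y))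
    (hsimple : Dense ((⨆ lam ∈ {z : ℂ | z.im ≠ 0}, defect T lam : Submodule ℂ H) : Set H))
    (hdefEq : Nonempty ((defect T Complex.I) ≃ₗᵢ[ℂ] (defect T (-Complex.I))))
    (hdefNe : defect T Complex.I ≠ ⊥)
    (lam0 : ℂ) :
    (∃ c : ℝ, 0 < c ∧ ∀ x : T.domain, c * ‖(x : H)‖ ≤ ‖T x - lam0 • (x : H)‖) ↔
      ∃ D : Submodule ℂ H, T.domain ≤ D ∧ D ≤ T.adjoint.domain ∧
        (T.adjoint.domRestrict D).adjoint = T.adjoint.domRestrict D ∧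
        ∀ y : H, ∃! x : T.adjoint.domain,
          (x : H) ∈ D ∧ T.adjoint x - lam0 • (x : H) = y :=
  statement14_general T hdense hclosed hsymm hdefEq lam0

end
end
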